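/- arXiv:math/0405398 — 3 statements merged into one kernel-verified Lean document; each statement's English description precedes it below -/
import Mathlib

section
/- Let δ > 0 and L > 0 be real numbers. There exists a real number β with 1 < β < e^{δL} (one may take β = e^{δL/4}), depending only on δ and L, with the following property: for all sequences a, λ : ℕ → ℝ such that for every k either λ_k = 0 or |λ_k| ≥ δ, and such that the series Σ_k a_k² and Σ_k a_k² · exp(−2·λ_k·(3L)) both converge, setting N(t) = (Σ_k a_k² · exp(−2·λ_k·t))^{1/2} for t ∈ [0, 3L], the following implication holds: if sup_{t ∈ [L, 2L]} N(t) ≥ β · sup_{t ∈ [0, L]} N(t), then sup_{t ∈ [2L, 3L]} N(t) ≥ β · sup_{t ∈ [L, 2L]} N(t). -/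
/-- The `L²`-norm at time `t` of a solution `F(t) = Σ_k a_k e^{-λ_k t} φ_k`
of the linear parabolic equation, expanded in an orthonormal eigenbasis
with eigenvalues `λ_k`. -/
noncomputable def specNorm (a lam : ℕ → ℝ) (t : ℝ) : ℝ :=
  Real.sqrt (∑' k, a k ^ 2 * Real.exp (-2 * lam k * t))

/-!
Each term `a_k² e^{-2λ_k t}` of `N(t)²` is convex in `t`, so `N(t)²` is convex and its supremum
over an interval is attained at an endpoint; by Cauchy–Schwarz it is also log-convex,
`N(2L)² ≤ N(L) N(3L)`. Growth by a factor `β > 1` from `[0, L]` to `[L, 2L]` forces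
`β N(L) ≤ N(2L)`, and log-convexity then gives `β N(2L) ≤ N(3L)`. So every `β > 1` works,
in particular `β = e^{δL/4} < e^{δL}`.
-/

open Real Set

section TsumInequalities

variable {ι : Type*}

theorem tsum_sqrt_mul_sqrt_le {f g : ι → ℝ} (hf : ∀ i, 0 ≤ f i) (hg : ∀ i, 0 ≤ g i)
    (hfs : Summable f) (hgs : Summable g) :
    ∑' i, √(f i) * √(g i) ≤ √(∑' i, f i) * √(∑' i, g i) :=
  tsum_le_of_sum_le' (by positivity) fun s =>
    (sum_sqrt_mul_sqrt_le s hf hg).trans <|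
      mul_le_mul (sqrt_le_sqrt (hfs.sum_le_tsum s fun i _ => hf i))
        (sqrt_le_sqrt (hgs.sum_le_tsum s fun i _ => hg i)) (sqrt_nonneg _) (sqrt_nonneg _)

theorem ConvexOn.tsum {E : Type*} [AddCommGroup E] [Module ℝ E] {s : Set E} {f : ι → E → ℝ}
    (hs : Convex ℝ s) (hf : ∀ i, ConvexOn ℝ s (f i))
    (hsum : ∀ x ∈ s, Summable fun i => f i x) :
    ConvexOn ℝ s fun x => ∑' i, f i x := by
  refine ⟨hs, fun x hx y hy a b ha hb hab => ?_⟩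
  have hxy : a • x + b • y ∈ s := hs hx hy ha hb hab
  calc ∑' i, f i (a • x + b • y)
      ≤ ∑' i, (a * f i x + b * f i y) :=
        (hsum _ hxy).tsum_le_tsum (fun i => (hf i).2 hx hy ha hb hab)
          (((hsum x hx).mul_left a).add ((hsum y hy).mul_left b))
    _ = a • ∑' i, f i x + b • ∑' i, f i y := by
        rw [((hsum x hx).mul_left a).tsum_add ((hsum y hy).mul_left b), tsum_mul_left,
          tsum_mul_left, smul_eq_mul, smul_eq_mul]

end TsumInequalities

section ExponentialSums

variable {ι : Type*} {w c : ι → ℝ} {s t u : ℝ}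

theorem exp_mul_le_max_of_mem_Icc (c : ℝ) (ht : t ∈ Icc s u) :
    exp (c * t) ≤ max (exp (c * s)) (exp (c * u)) := by
  rw [← exp_monotone.map_max]
  refine exp_le_exp.2 ?_
  rcases le_total 0 c with hc | hc
  · exact le_max_of_le_right (mul_le_mul_of_nonneg_left ht.2 hc)
  · exact le_max_of_le_left (mul_le_mul_of_nonpos_left ht.1 hc)

theorem summable_mul_exp_of_mem_Icc (hw : ∀ i, 0 ≤ w i)
    (hs : Summable fun i => w i * exp (c i * s)) (hu : Summable fun i => w i * exp (c i * u))
    (ht : t ∈ Icc s u) : Summable fun i => w i * exp (c i * t) := by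
  refine Summable.of_nonneg_of_le (fun i => by have := hw i; positivity) (fun i => ?_) (hs.add hu)
  rw [← mul_add]
  refine mul_le_mul_of_nonneg_left ((exp_mul_le_max_of_mem_Icc (c i) ht).trans ?_) (hw i)
  exact max_le_add_of_nonneg (exp_pos _).le (exp_pos _).le

theorem convexOn_tsum_mul_exp (hw : ∀ i, 0 ≤ w i)
    (hs : Summable fun i => w i * exp (c i * s)) (hu : Summable fun i => w i * exp (c i * u)) :
    ConvexOn ℝ (Icc s u) fun t => ∑' i, w i * exp (c i * t) := by
  refine ConvexOn.tsum (convex_Icc s u) (fun i => ?_)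
    fun t ht => summable_mul_exp_of_mem_Icc hw hs hu ht
  exact ((convexOn_exp.comp_linearMap (LinearMap.mulLeft ℝ (c i))).smul (hw i)).subset
    (subset_univ _) (convex_Icc s u)

theorem tsum_mul_exp_le_sqrt_mul_sqrt (hw : ∀ i, 0 ≤ w i)
    (hs : Summable fun i => w i * exp (c i * s)) (hu : Summable fun i => w i * exp (c i * u))
    (hmid : s + u = 2 * t) :
    ∑' i, w i * exp (c i * t) ≤
      √(∑' i, w i * exp (c i * s)) * √(∑' i, w i * exp (c i * u)) := by
  have hterm : ∀ i, w i * exp (c i * t) = √(w i * exp (c i * s)) * √(w i * exp (c i * u)) := by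
    intro i
    have hsq : w i * exp (c i * s) * (w i * exp (c i * u)) = (w i * exp (c i * t)) ^ 2 := by
      have : c i * s + c i * u = c i * t + c i * t := by linear_combination c i * hmid
      rw [mul_pow, sq (exp _), ← exp_add, mul_mul_mul_comm, ← exp_add, this, sq]
    rw [← sqrt_mul (mul_nonneg (hw i) (exp_pos _).le), hsq,
      sqrt_sq (mul_nonneg (hw i) (exp_pos _).le)]
  simp_rw [hterm]
  exact tsum_sqrt_mul_sqrt_le (fun i => mul_nonneg (hw i) (exp_pos _).le)
    (fun i => mul_nonneg (hw i) (exp_pos _).le) hs hu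

end ExponentialSums

theorem csSup_image_Icc_eq_max {α β : Type*} [LinearOrder α] [ConditionallyCompleteLinearOrder β]
    {f : α → β} {p q : α} (hpq : p ≤ q) (hf : ∀ t ∈ Icc p q, f t ≤ max (f p) (f q)) :
    sSup (f '' Icc p q) = max (f p) (f q) := by
  refine IsGreatest.csSup_eq ⟨?_, forall_mem_image.2 hf⟩
  rcases max_choice (f p) (f q) with h | h <;> rw [h]
  · exact mem_image_of_mem f (left_mem_Icc.2 hpq)
  · exact mem_image_of_mem f (right_mem_Icc.2 hpq)

theorem mul_max_le_max_of_sq_le_mul {β x y z : ℝ} (hβ : 1 < β) (hx : 0 ≤ x) (hz : 0 ≤ z)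
    (hy : y ^ 2 ≤ x * z) (h : β * x ≤ max x y) : β * max x y ≤ max y z := by
  have hxy : β * x ≤ y := by
    rcases max_choice x y with hm | hm <;> rw [hm] at h
    · have hx0 : x = 0 := by nlinarith
      subst hx0
      nlinarith
    · exact h
  have hyz : β * y ≤ z := by
    rcases (le_trans (by nlinarith) hxy : (0 : ℝ) ≤ y).eq_or_lt with hy0 | hy0
    · rw [← hy0, mul_zero]; exact hz
    · nlinarith
  rw [max_eq_right (by nlinarith)]
  exact hyz.trans (le_max_right _ _)

section SpecNorm

variable {a lam : ℕ → ℝ} {s t u : ℝ}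

theorem specNorm_nonneg (a lam : ℕ → ℝ) (t : ℝ) : 0 ≤ specNorm a lam t := sqrt_nonneg _

theorem sSup_specNorm_image_Icc {p q : ℝ}
    (hs : Summable fun k => a k ^ 2 * exp (-2 * lam k * s))
    (hu : Summable fun k => a k ^ 2 * exp (-2 * lam k * u))
    (hsp : s ≤ p) (hpq : p ≤ q) (hqu : q ≤ u) :
    sSup (specNorm a lam '' Icc p q) = max (specNorm a lam p) (specNorm a lam q) := by
  refine csSup_image_Icc_eq_max hpq fun t ht => ?_
  rw [specNorm, specNorm, specNorm, ← sqrt_monotone.map_max]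
  refine sqrt_le_sqrt ?_
  exact (convexOn_tsum_mul_exp (fun k => sq_nonneg (a k)) hs hu).le_max_of_mem_Icc
    ⟨hsp, hpq.trans hqu⟩ ⟨hsp.trans hpq, hqu⟩ ht

theorem specNorm_sq_le_mul (hs : Summable fun k => a k ^ 2 * exp (-2 * lam k * s))
    (hu : Summable fun k => a k ^ 2 * exp (-2 * lam k * u)) (hmid : s + u = 2 * t) :
    specNorm a lam t ^ 2 ≤ specNorm a lam s * specNorm a lam u := by
  rw [specNorm, sq_sqrt (tsum_nonneg fun k => by positivity)]
  exact tsum_mul_exp_le_sqrt_mul_sqrt (fun k => sq_nonneg (a k)) hs hu hmid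

end SpecNorm

/-- Growth-propagation implication of the lemma `lemma_beta`: there is
`β` with `1 < β < e^{δL}` (one may take `β = e^{δL/4}`) such that for every
solution whose nonzero eigenvalues satisfy `|λ_k| ≥ δ`, if the `L²`-norm grows
by a factor `β` from `[0,L]` to `[L,2L]`, then it grows by a factor `β` from
`[L,2L]` to `[2L,3L]`. -/
theorem growth_propagates
    (δ L : ℝ) (hδ : 0 < δ) (hL : 0 < L) :
    ∃ β : ℝ, 1 < β ∧ β < Real.exp (δ * L) ∧
      ∀ a lam : ℕ → ℝ,
        (∀ k, lam k = 0 ∨ δ ≤ |lam k|) →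
        (Summable fun k => a k ^ 2) →
        (Summable fun k => a k ^ 2 * Real.exp (-2 * lam k * (3 * L))) →
        (β * sSup (specNorm a lam '' Set.Icc 0 L)
            ≤ sSup (specNorm a lam '' Set.Icc L (2 * L)) →
          β * sSup (specNorm a lam '' Set.Icc L (2 * L))
            ≤ sSup (specNorm a lam '' Set.Icc (2 * L) (3 * L))) := by
  have hδL : 0 < δ * L := mul_pos hδ hL
  have hβ : 1 < exp (δ * L / 4) := one_lt_exp_iff.2 (by linarith)
  refine ⟨exp (δ * L / 4), hβ, exp_lt_exp.2 (by linarith), fun a lam _ h0 h3 hgrowth => ?_⟩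
  have h0' : Summable fun k => a k ^ 2 * exp (-2 * lam k * 0) := by simpa using h0
  have hsup {p q : ℝ} (hp : 0 ≤ p) (hpq : p ≤ q) (hq : q ≤ 3 * L) :=
    sSup_specNorm_image_Icc h0' h3 hp hpq hq
  rw [hsup le_rfl hL.le (by linarith), hsup hL.le (by linarith) (by linarith)] at hgrowth
  rw [hsup hL.le (by linarith) (by linarith), hsup (by linarith) (by linarith) le_rfl]
  have hL' := summable_mul_exp_of_mem_Icc (fun k => sq_nonneg (a k)) h0' h3
    (⟨hL.le, by linarith⟩ : L ∈ Icc 0 (3 * L))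
  exact mul_max_le_max_of_sq_le_mul hβ (specNorm_nonneg a lam L) (specNorm_nonneg a lam _)
    (specNorm_sq_le_mul hL' h3 (by ring))
    ((mul_le_mul_of_nonneg_left (le_max_right _ _) (exp_pos _).le).trans hgrowth)
end

section
/- Let δ > 0 and L > 0 be real numbers. There exists a real number β with 1 < β < e^{δL} (one may take β = e^{δL/4}), depending only on δ and L, with the following property: for all sequences a, λ : ℕ → ℝ such that for every k either λ_k = 0 or |λ_k| ≥ δ, and such that the series Σ_k a_k² and Σ_k a_k² · exp(−2·λ_k·(3L)) both converge, setting N(t) = (Σ_k a_k² · exp(−2·λ_k·t))^{1/2} for t ∈ [0, 3L], the following implication holds: if sup_{t ∈ [2L, 3L]} N(t) ≤ β^{−1} · sup_{t ∈ [L, 2L]} N(t), then sup_{t ∈ [L, 2L]} N(t) ≤ β^{−1} · sup_{t ∈ [0, L]} N(t). -/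
/-- Cauchy–Schwarz inequality for infinite sums of nonnegative reals. -/
lemma tsum_cauchy_schwarz (f g : ℕ → ℝ) (hf0 : ∀ k, 0 ≤ f k) (hg0 : ∀ k, 0 ≤ g k)
    (hf : Summable fun k => f k ^ 2) (hg : Summable fun k => g k ^ 2) :
    (∑' k, f k * g k) ^ 2 ≤ (∑' k, f k ^ 2) * ∑' k, g k ^ 2 := by
  have hfg : Summable fun k => f k * g k := by
    refine Summable.of_nonneg_of_le (fun k => mul_nonneg (hf0 k) (hg0 k))
      (fun k => ?_) ((hf.add hg).mul_left (1/2 : ℝ))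
    have := sq_nonneg (f k - g k)
    nlinarith [sq_nonneg (f k - g k)]
  have key : ∀ s : Finset ℕ, (∑ k ∈ s, f k * g k) ^ 2
      ≤ (∑' k, f k ^ 2) * ∑' k, g k ^ 2 := by
    intro s
    calc (∑ k ∈ s, f k * g k) ^ 2 ≤ (∑ k ∈ s, f k ^ 2) * ∑ k ∈ s, g k ^ 2 :=
          Finset.sum_mul_sq_le_sq_mul_sq s f g
      _ ≤ (∑' k, f k ^ 2) * ∑' k, g k ^ 2 := by
          apply mul_le_mul (Summable.sum_le_tsum s (fun k _ => sq_nonneg _) hf)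
            (Summable.sum_le_tsum s (fun k _ => sq_nonneg _) hg)
            (Finset.sum_nonneg fun k _ => sq_nonneg _)
            (tsum_nonneg fun k => sq_nonneg _)
  have h1 : Filter.Tendsto (fun s : Finset ℕ => (∑ k ∈ s, f k * g k) ^ 2)
      Filter.atTop (nhds ((∑' k, f k * g k) ^ 2)) := hfg.hasSum.pow 2
  exact le_of_tendsto h1 (Filter.Eventually.of_forall key)

/-- Decay-propagation implication of the lemma `lemma_beta`: there is
`β` with `1 < β < e^{δL}` (one may take `β = e^{δL/4}`) such that for every
solution whose nonzero eigenvalues satisfy `|λ_k| ≥ δ`, if the `L²`-norm decays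
by a factor `β⁻¹` from `[L,2L]` to `[2L,3L]`, then it decays by a factor `β⁻¹`
from `[0,L]` to `[L,2L]`. -/
theorem decay_propagates
    (δ L : ℝ) (hδ : 0 < δ) (hL : 0 < L) :
    ∃ β : ℝ, 1 < β ∧ β < Real.exp (δ * L) ∧
      ∀ a lam : ℕ → ℝ,
        (∀ k, lam k = 0 ∨ δ ≤ |lam k|) →
        (Summable fun k => a k ^ 2) →
        (Summable fun k => a k ^ 2 * Real.exp (-2 * lam k * (3 * L))) →
        (sSup (specNorm a lam '' Set.Icc (2 * L) (3 * L))
            ≤ β⁻¹ * sSup (specNorm a lam '' Set.Icc L (2 * L)) →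
          sSup (specNorm a lam '' Set.Icc L (2 * L))
            ≤ β⁻¹ * sSup (specNorm a lam '' Set.Icc 0 L)) := by
  refine ⟨Real.exp (δ * L / 4), ?_, ?_, ?_⟩
  · exact Real.one_lt_exp_iff.mpr (by positivity)
  · exact Real.exp_lt_exp.mpr (by nlinarith)
  intro a lam _ hS0 hS3 hyp
  set β := Real.exp (δ * L / 4) with hβdef
  have hβ1 : 1 < β := Real.one_lt_exp_iff.mpr (by positivity)
  have hβinv : 0 ≤ β⁻¹ := by positivity
  -- the squared norm
  set G : ℝ → ℝ := fun t => ∑' k, a k ^ 2 * Real.exp (-2 * lam k * t) with hGdef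
  have hGnonneg : ∀ t, 0 ≤ G t := fun t => tsum_nonneg fun k => by positivity
  -- summability on [0, 3L]
  have hSum : ∀ t, 0 ≤ t → t ≤ 3 * L →
      Summable fun k => a k ^ 2 * Real.exp (-2 * lam k * t) := by
    intro t ht0 ht3
    refine Summable.of_nonneg_of_le (fun k => by positivity) (fun k => ?_) (hS0.add hS3)
    have : Real.exp (-2 * lam k * t) ≤ 1 + Real.exp (-2 * lam k * (3 * L)) := by
      rcases le_or_gt 0 (lam k) with h | h
      · have : Real.exp (-2 * lam k * t) ≤ Real.exp 0 :=
          Real.exp_le_exp.mpr (by nlinarith)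
        simp only [Real.exp_zero] at this
        nlinarith [Real.exp_pos (-2 * lam k * (3 * L))]
      · have : Real.exp (-2 * lam k * t) ≤ Real.exp (-2 * lam k * (3 * L)) :=
          Real.exp_le_exp.mpr (by nlinarith)
        linarith
    nlinarith [sq_nonneg (a k), Real.exp_pos (-2 * lam k * t)]
  -- convexity: on a subinterval the squared norm is bounded by the endpoint values
  have hConv : ∀ c d t : ℝ, 0 ≤ c → d ≤ 3 * L → c < d → t ∈ Set.Icc c d →
      G t ≤ max (G c) (G d) := by
    intro c d t hc hd hcd ht
    obtain ⟨htc, htd⟩ := ht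
    set θ : ℝ := (d - t) / (d - c) with hθdef
    have hdc : 0 < d - c := by linarith
    have hθ0 : 0 ≤ θ := div_nonneg (by linarith) hdc.le
    have hθ1 : θ ≤ 1 := (div_le_one hdc).mpr (by linarith)
    have hne : d - c ≠ 0 := hdc.ne'
    have htrep : t = θ * c + (1 - θ) * d := by
      rw [hθdef]
      field_simp
      ring
    have hterm : ∀ k, a k ^ 2 * Real.exp (-2 * lam k * t)
        ≤ θ * (a k ^ 2 * Real.exp (-2 * lam k * c))
          + (1 - θ) * (a k ^ 2 * Real.exp (-2 * lam k * d)) := by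
      intro k
      have h1θ : (0:ℝ) ≤ 1 - θ := by linarith
      have habθ : θ + (1 - θ) = 1 := by ring
      have hconv := convexOn_exp.2 (Set.mem_univ (-2 * lam k * c))
        (Set.mem_univ (-2 * lam k * d)) hθ0 h1θ habθ
      simp only [smul_eq_mul] at hconv
      have harg : θ * (-2 * lam k * c) + (1 - θ) * (-2 * lam k * d)
          = -2 * lam k * t := by rw [htrep]; ring
      rw [harg] at hconv
      nlinarith [sq_nonneg (a k)]
    have hsc := hSum c hc (by linarith)
    have hsd := hSum d (by linarith) hd
    have hst := hSum t (by linarith) (by linarith)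
    have : G t ≤ θ * G c + (1 - θ) * G d := by
      have := Summable.tsum_le_tsum hterm hst ((hsc.mul_left θ).add (hsd.mul_left (1 - θ)))
      calc G t ≤ ∑' k, (θ * (a k ^ 2 * Real.exp (-2 * lam k * c))
              + (1 - θ) * (a k ^ 2 * Real.exp (-2 * lam k * d))) := this
        _ = θ * G c + (1 - θ) * G d := by
            rw [Summable.tsum_add (hsc.mul_left θ) (hsd.mul_left (1 - θ)),
              tsum_mul_left, tsum_mul_left]
    calc G t ≤ θ * G c + (1 - θ) * G d := this
      _ ≤ θ * max (G c) (G d) + (1 - θ) * max (G c) (G d) := by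
          have h1 := le_max_left (G c) (G d)
          have h2 := le_max_right (G c) (G d)
          have p1 := mul_le_mul_of_nonneg_left h1 hθ0
          have p2 := mul_le_mul_of_nonneg_left h2 (by linarith : (0:ℝ) ≤ 1 - θ)
          linarith
      _ = max (G c) (G d) := by ring
  -- specNorm bounded on subintervals by max of endpoints
  have hN : ∀ t, specNorm a lam t = Real.sqrt (G t) := fun t => rfl
  have hNmax : ∀ c d t : ℝ, 0 ≤ c → d ≤ 3 * L → c < d → t ∈ Set.Icc c d →
      specNorm a lam t ≤ max (specNorm a lam c) (specNorm a lam d) := by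
    intro c d t hc hd hcd ht
    simp only [hN]
    calc Real.sqrt (G t) ≤ Real.sqrt (max (G c) (G d)) :=
          Real.sqrt_le_sqrt (hConv c d t hc hd hcd ht)
      _ = max (Real.sqrt (G c)) (Real.sqrt (G d)) := by
          rcases le_total (G c) (G d) with h | h
          · rw [max_eq_right h, max_eq_right (Real.sqrt_le_sqrt h)]
          · rw [max_eq_left h, max_eq_left (Real.sqrt_le_sqrt h)]
  -- suprema facts
  have hL2 : L < 2 * L := by linarith
  have h2L3 : 2 * L < 3 * L := by linarith
  set n0 := specNorm a lam 0
  set n1 := specNorm a lam L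
  set n2 := specNorm a lam (2 * L)
  have hn0 : 0 ≤ n0 := Real.sqrt_nonneg _
  have hn1 : 0 ≤ n1 := Real.sqrt_nonneg _
  have hn2 : 0 ≤ n2 := Real.sqrt_nonneg _
  -- sSup over [L,2L] is at most max n1 n2
  have hs1le : sSup (specNorm a lam '' Set.Icc L (2 * L)) ≤ max n1 n2 := by
    apply Real.sSup_le _ (le_trans hn1 (le_max_left _ _))
    rintro x ⟨t, ht, rfl⟩
    exact hNmax L (2 * L) t hL.le (by linarith) hL2 ht
  -- n2 is at most sSup over [2L,3L]
  have hbdd2 : BddAbove (specNorm a lam '' Set.Icc (2 * L) (3 * L)) := by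
    refine ⟨max (specNorm a lam (2 * L)) (specNorm a lam (3 * L)), ?_⟩
    rintro x ⟨t, ht, rfl⟩
    exact hNmax (2 * L) (3 * L) t (by linarith) le_rfl h2L3 ht
  have hn2le : n2 ≤ sSup (specNorm a lam '' Set.Icc (2 * L) (3 * L)) :=
    le_csSup hbdd2 ⟨2 * L, ⟨le_rfl, h2L3.le⟩, rfl⟩
  -- n1 and n0 are at most sSup over [0,L]
  have hbdd0 : BddAbove (specNorm a lam '' Set.Icc 0 L) := by
    refine ⟨max (specNorm a lam 0) (specNorm a lam L), ?_⟩
    rintro x ⟨t, ht, rfl⟩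
    exact hNmax 0 L t le_rfl (by linarith) hL ht
  have hn1le0 : n1 ≤ sSup (specNorm a lam '' Set.Icc 0 L) :=
    le_csSup hbdd0 ⟨L, ⟨hL.le, le_rfl⟩, rfl⟩
  have hn0le0 : n0 ≤ sSup (specNorm a lam '' Set.Icc 0 L) :=
    le_csSup hbdd0 ⟨0, ⟨le_rfl, hL.le⟩, rfl⟩
  -- step 1: n2 ≤ β⁻¹ * n1
  have hstep1 : n2 ≤ β⁻¹ * n1 := by
    have h := le_trans hn2le (le_trans hyp (mul_le_mul_of_nonneg_left hs1le hβinv))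
    rcases max_cases n1 n2 with ⟨h1, _⟩ | ⟨h1, _⟩
    · rwa [h1] at h
    · rw [h1] at h
      have hβinv1 : β⁻¹ < 1 := inv_lt_one_of_one_lt₀ hβ1
      have : n2 ≤ 0 := by nlinarith
      have : n2 = 0 := le_antisymm this hn2
      rw [this]; positivity
  -- step 2 (Cauchy–Schwarz): n1² ≤ n0 * n2, hence n1 ≤ β⁻¹ * n0
  have hCS : G L ^ 2 ≤ G 0 * G (2 * L) := by
    have e1 : (fun k => |a k| * (|a k| * Real.exp (-2 * lam k * L)))
        = fun k => a k ^ 2 * Real.exp (-2 * lam k * L) := by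
      funext k; rw [← mul_assoc, ← abs_mul, abs_mul_self]; ring
    have e2 : (fun k => |a k| ^ 2) = fun k => a k ^ 2 := by
      funext k; rw [sq_abs]
    have e3 : (fun k => (|a k| * Real.exp (-2 * lam k * L)) ^ 2)
        = fun k => a k ^ 2 * Real.exp (-2 * lam k * (2 * L)) := by
      funext k
      rw [mul_pow, sq_abs]
      congr 1
      rw [← Real.exp_nat_mul]
      congr 1
      push_cast
      ring
    have hcs := tsum_cauchy_schwarz (fun k => |a k|)
      (fun k => |a k| * Real.exp (-2 * lam k * L))
      (fun k => abs_nonneg _) (fun k => by positivity)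
      (by simpa [sq_abs] using hS0)
      (by rw [e3]; exact hSum (2 * L) (by linarith) (by linarith))
    simp only [e1, e2, e3] at hcs
    have hG0 : G 0 = ∑' k, a k ^ 2 := by
      simp [hGdef]
    have hGL : G L = ∑' k, a k ^ 2 * Real.exp (-2 * lam k * L) := rfl
    have hG2L : G (2 * L) = ∑' k, a k ^ 2 * Real.exp (-2 * lam k * (2 * L)) := rfl
    rw [hGL, hG0, hG2L]
    exact hcs
  have hstep2 : n1 ≤ β⁻¹ * n0 := by
    have hsq : ∀ t, specNorm a lam t ^ 2 = G t := fun t => by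
      rw [hN t]; exact Real.sq_sqrt (hGnonneg t)
    have h4 : n1 ^ 2 * n1 ^ 2 ≤ n0 ^ 2 * (β⁻¹ * n1) ^ 2 := by
      have hn2sq : n2 ^ 2 ≤ (β⁻¹ * n1) ^ 2 := by
        apply pow_le_pow_left₀ hn2 hstep1
      calc n1 ^ 2 * n1 ^ 2 = G L ^ 2 := by rw [hsq]; ring
        _ ≤ G 0 * G (2 * L) := hCS
        _ = n0 ^ 2 * n2 ^ 2 := by rw [hsq, hsq]
        _ ≤ n0 ^ 2 * (β⁻¹ * n1) ^ 2 :=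
            mul_le_mul_of_nonneg_left hn2sq (sq_nonneg n0)
    rcases eq_or_lt_of_le hn1 with h | h
    · rw [← h]; positivity
    · have hpos : 0 < n1 * n1 := mul_pos h h
      have h5 : n1 ^ 2 ≤ (β⁻¹ * n0) ^ 2 := by nlinarith
      exact (abs_le_of_sq_le_sq' h5 (mul_nonneg hβinv hn0)).2
  -- conclude
  calc sSup (specNorm a lam '' Set.Icc L (2 * L)) ≤ max n1 n2 := hs1le
    _ ≤ β⁻¹ * sSup (specNorm a lam '' Set.Icc 0 L) := by
        apply max_le
        · exact le_trans hstep2 (by gcongr)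
        · calc n2 ≤ β⁻¹ * n1 := hstep1
            _ ≤ β⁻¹ * sSup (specNorm a lam '' Set.Icc 0 L) := by gcongr
end

section
/- Let δ > 0 and L > 0 be real numbers. There exists a real number β with 1 < β < e^{δL} (one may take β = e^{δL/4}), depending only on δ and L, with the following property: for all sequences a, λ : ℕ → ℝ such that |λ_k| ≥ δ for every k (so that no zero eigenvalue occurs), and such that the series Σ_k a_k² and Σ_k a_k² · exp(−2·λ_k·(3L)) both converge, setting N(t) = (Σ_k a_k² · exp(−2·λ_k·t))^{1/2} for t ∈ [0, 3L], at least one of the following two inequalities holds: either sup_{t ∈ [2L, 3L]} N(t) ≥ β · sup_{t ∈ [L, 2L]} N(t), or sup_{t ∈ [L, 2L]} N(t) ≤ β^{−1} · sup_{t ∈ [0, L]} N(t). -/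
/-- Cauchy–Schwarz inequality for tsums of nonnegative sequences. -/
lemma tsum_cs (f g : ℕ → ℝ) (hf0 : ∀ k, 0 ≤ f k) (hg0 : ∀ k, 0 ≤ g k)
    (hf : Summable fun k => f k ^ 2) (hg : Summable fun k => g k ^ 2) :
    (∑' k, f k * g k) ^ 2 ≤ (∑' k, f k ^ 2) * (∑' k, g k ^ 2) := by
  have hA : 0 ≤ ∑' k, f k ^ 2 := tsum_nonneg fun k => sq_nonneg _
  have hB : 0 ≤ ∑' k, g k ^ 2 := tsum_nonneg fun k => sq_nonneg _
  have hfg : Summable fun k => f k * g k := by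
    refine Summable.of_nonneg_of_le (fun k => mul_nonneg (hf0 k) (hg0 k)) (fun k => ?_)
      ((hf.add hg).div_const 2)
    have h := sq_nonneg (f k - g k)
    nlinarith
  have key : ∑' k, f k * g k ≤ Real.sqrt ((∑' k, f k ^ 2) * (∑' k, g k ^ 2)) := by
    refine Summable.tsum_le_of_sum_le hfg fun s => ?_
    have h1 := Finset.sum_mul_sq_le_sq_mul_sq s f g
    have h2 : (∑ i ∈ s, f i ^ 2) ≤ ∑' k, f k ^ 2 :=
      Summable.sum_le_tsum s (fun i _ => sq_nonneg _) hf
    have h3 : (∑ i ∈ s, g i ^ 2) ≤ ∑' k, g k ^ 2 :=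
      Summable.sum_le_tsum s (fun i _ => sq_nonneg _) hg
    have h4 : (∑ i ∈ s, f i * g i) ^ 2 ≤ (∑' k, f k ^ 2) * (∑' k, g k ^ 2) :=
      h1.trans (mul_le_mul h2 h3 (Finset.sum_nonneg fun i _ => sq_nonneg _) hA)
    have h5 : 0 ≤ ∑ i ∈ s, f i * g i :=
      Finset.sum_nonneg fun i _ => mul_nonneg (hf0 i) (hg0 i)
    exact (Real.le_sqrt h5 (mul_nonneg hA hB)).mpr h4
  calc (∑' k, f k * g k) ^ 2
      ≤ Real.sqrt ((∑' k, f k ^ 2) * (∑' k, g k ^ 2)) ^ 2 := by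
        apply pow_le_pow_left₀ (tsum_nonneg fun k => mul_nonneg (hf0 k) (hg0 k)) key
    _ = _ := Real.sq_sqrt (mul_nonneg hA hB)

/-- On an interval, the spectral norm is bounded by the max of its endpoint
values, by convexity of each exponential term. -/
lemma specNorm_le_max (a lam : ℕ → ℝ) (c d : ℝ) (hcd : c < d)
    (hc : Summable fun k => a k ^ 2 * Real.exp (-2 * lam k * c))
    (hd : Summable fun k => a k ^ 2 * Real.exp (-2 * lam k * d)) :
    ∀ t ∈ Set.Icc c d, specNorm a lam t ≤ max (specNorm a lam c) (specNorm a lam d) := by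
  intro t ht
  have hdc : 0 < d - c := by linarith
  set u := (t - c) / (d - c) with hu
  have hu0 : 0 ≤ u := div_nonneg (by linarith [ht.1]) hdc.le
  have hu1 : u ≤ 1 := (div_le_one hdc).mpr (by linarith [ht.2])
  have hterm : ∀ k, a k ^ 2 * Real.exp (-2 * lam k * t)
      ≤ (1 - u) * (a k ^ 2 * Real.exp (-2 * lam k * c))
        + u * (a k ^ 2 * Real.exp (-2 * lam k * d)) := by
    intro k
    have hconv := convexOn_exp.2 (Set.mem_univ (-2 * lam k * c))
      (Set.mem_univ (-2 * lam k * d)) (by linarith : (0:ℝ) ≤ 1 - u) hu0 (by ring)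
    simp only [smul_eq_mul] at hconv
    have harg : -2 * lam k * t = (1 - u) * (-2 * lam k * c) + u * (-2 * lam k * d) := by
      rw [hu]; field_simp; ring
    rw [harg]
    calc a k ^ 2 * Real.exp ((1 - u) * (-2 * lam k * c) + u * (-2 * lam k * d))
        ≤ a k ^ 2 * ((1 - u) * Real.exp (-2 * lam k * c) + u * Real.exp (-2 * lam k * d)) :=
          mul_le_mul_of_nonneg_left hconv (sq_nonneg _)
      _ = _ := by ring
  have hsummid : Summable fun k => a k ^ 2 * Real.exp (-2 * lam k * t) :=
    Summable.of_nonneg_of_le (fun k => mul_nonneg (sq_nonneg _) (Real.exp_pos _).le) hterm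
      ((hc.mul_left _).add (hd.mul_left _))
  have hts : (∑' k, a k ^ 2 * Real.exp (-2 * lam k * t))
      ≤ (1 - u) * (∑' k, a k ^ 2 * Real.exp (-2 * lam k * c))
        + u * (∑' k, a k ^ 2 * Real.exp (-2 * lam k * d)) := by
    have h1 := Summable.tsum_le_tsum hterm hsummid ((hc.mul_left _).add (hd.mul_left _))
    rwa [Summable.tsum_add (hc.mul_left _) (hd.mul_left _), tsum_mul_left, tsum_mul_left] at h1
  set Tc := ∑' k, a k ^ 2 * Real.exp (-2 * lam k * c) with hTc
  set Td := ∑' k, a k ^ 2 * Real.exp (-2 * lam k * d) with hTd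
  have hTc0 : 0 ≤ Tc := tsum_nonneg fun k => mul_nonneg (sq_nonneg _) (Real.exp_pos _).le
  have hTd0 : 0 ≤ Td := tsum_nonneg fun k => mul_nonneg (sq_nonneg _) (Real.exp_pos _).le
  have hmax : (1 - u) * Tc + u * Td ≤ max Tc Td := by
    have h1 := le_max_left Tc Td
    have h2 := le_max_right Tc Td
    nlinarith
  have hs : specNorm a lam t ≤ Real.sqrt (max Tc Td) :=
    Real.sqrt_le_sqrt (hts.trans hmax)
  rcases le_total Tc Td with h | h
  · rw [max_eq_right h] at hs
    exact hs.trans (le_max_right _ _)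
  · rw [max_eq_left h] at hs
    exact hs.trans (le_max_left _ _)

/-- Elementary inequality: `x ≤ 1 + x³` for `x ≥ 0`. -/
lemma aux_le1 (x : ℝ) (hx : 0 ≤ x) : x ≤ 1 + x ^ 3 := by
  rcases le_total x 1 with h | h
  · nlinarith [pow_nonneg hx 3]
  · nlinarith [mul_nonneg (mul_nonneg hx (by linarith : (0:ℝ) ≤ x - 1)) (by linarith : (0:ℝ) ≤ x + 1)]

/-- Elementary inequality: `x² ≤ 1 + x³` for `x ≥ 0`. -/
lemma aux_le2 (x : ℝ) (hx : 0 ≤ x) : x ^ 2 ≤ 1 + x ^ 3 := by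
  rcases le_total x 1 with h | h
  · nlinarith [pow_nonneg hx 3, mul_nonneg (by linarith : (0:ℝ) ≤ 1 - x) (by linarith : (0:ℝ) ≤ 1 + x)]
  · nlinarith [mul_nonneg (mul_nonneg hx hx) (by linarith : (0:ℝ) ≤ x - 1)]

/-- The quantitative spectral-gap inequality on each term. -/
lemma aux_gap (E ε x : ℝ) (hE : 1 < E) (hx : 0 < x) (hεE : ε * E = (E - 1) ^ 2)
    (hcase : E ≤ x ∨ x * E ≤ 1) :
    (1 + ε) * (x + x ^ 2) ≤ 1 + x ^ 3 := by
  have hEpos : (0:ℝ) < E := by linarith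
  have key : 0 ≤ (x + 1) * ((x - E) * (x * E - 1)) := by
    rcases hcase with h | h
    · have h1 : 0 ≤ x - E := by linarith
      have h2 : 0 ≤ x * E - 1 := by nlinarith
      positivity
    · have h1 : x - E ≤ 0 := by nlinarith
      have h2 : x * E - 1 ≤ 0 := by linarith
      have h3 : 0 ≤ (x - E) * (x * E - 1) := by
        nlinarith [mul_nonneg (neg_nonneg.2 h1) (neg_nonneg.2 h2)]
      exact mul_nonneg (by linarith : (0:ℝ) ≤ x + 1) h3
  have h6 : ε * E * (x + x ^ 2) = (E - 1) ^ 2 * (x + x ^ 2) := by rw [hεE]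
  have h5 : E * ((1 + ε) * (x + x ^ 2)) ≤ E * (1 + x ^ 3) := by nlinarith [key, h6]
  exact le_of_mul_le_mul_left h5 hEpos

/-- The final arithmetic contradiction. -/
lemma final_contra (ε T0 T1 T2 T3 : ℝ) (hεpos : 0 < ε)
    (hT1n : 0 ≤ T1) (hT2n : 0 ≤ T2)
    (hMpos : 0 < max T1 T2)
    (hT3lt : T3 < (1 + ε / 4) * max T1 T2) (hT0lt : T0 < (1 + ε / 4) * max T1 T2)
    (hcs1 : T2 ^ 2 ≤ T1 * T3) (hcs0 : T1 ^ 2 ≤ T0 * T2)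
    (hkey : (1 + ε) * (T1 + T2) ≤ T0 + T3) : False := by
  have hb : (0:ℝ) < 1 + ε / 4 := by linarith
  rcases le_total T1 T2 with hc | hc
  · rw [max_eq_right hc] at hMpos hT3lt hT0lt
    have e1 : T2 * T2 ≤ (1 + ε / 4) * T1 * T2 := by
      nlinarith [mul_le_mul_of_nonneg_left hT3lt.le hT1n, hcs1]
    have e2 : T2 ≤ (1 + ε / 4) * T1 := le_of_mul_le_mul_right (by linarith) hMpos
    have h4 : (1 + ε) * (T1 + T2) < 2 * ((1 + ε / 4) * T2) := by linarith
    have P1 := mul_lt_mul_of_pos_left h4 hb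
    have P2 := mul_le_mul_of_nonneg_left e2 (by linarith : (0:ℝ) ≤ 1 + ε)
    nlinarith [P1, P2, mul_pos hεpos hMpos,
      mul_nonneg (mul_nonneg hεpos.le hεpos.le) hMpos.le]
  · rw [max_eq_left hc] at hMpos hT3lt hT0lt
    have e1 : T1 * T1 ≤ (1 + ε / 4) * T2 * T1 := by
      nlinarith [mul_le_mul_of_nonneg_left hT0lt.le hT2n, hcs0]
    have e2 : T1 ≤ (1 + ε / 4) * T2 := le_of_mul_le_mul_right (by linarith) hMpos
    have h4 : (1 + ε) * (T1 + T2) < 2 * ((1 + ε / 4) * T1) := by linarith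
    have P1 := mul_lt_mul_of_pos_left h4 hb
    have P2 := mul_le_mul_of_nonneg_left e2 (by linarith : (0:ℝ) ≤ 1 + ε)
    nlinarith [P1, P2, mul_pos hεpos hMpos,
      mul_nonneg (mul_nonneg hεpos.le hεpos.le) hMpos.le]

/-- Dichotomy part of the lemma `lemma_beta` when the kernel component
vanishes: there is `β` with `1 < β < e^{δL}` (one may take `β = e^{δL/4}`)
such that for every solution all of whose eigenvalues satisfy `|λ_k| ≥ δ`,
either the `L²`-norm grows by a factor `β` from `[L,2L]` to `[2L,3L]`, or it
decays by a factor `β⁻¹` from `[0,L]` to `[L,2L]`. -/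
theorem growth_or_decay
    (δ L : ℝ) (hδ : 0 < δ) (hL : 0 < L) :
    ∃ β : ℝ, 1 < β ∧ β < Real.exp (δ * L) ∧
      ∀ a lam : ℕ → ℝ,
        (∀ k, δ ≤ |lam k|) →
        (Summable fun k => a k ^ 2) →
        (Summable fun k => a k ^ 2 * Real.exp (-2 * lam k * (3 * L))) →
        (β * sSup (specNorm a lam '' Set.Icc L (2 * L))
            ≤ sSup (specNorm a lam '' Set.Icc (2 * L) (3 * L)) ∨
          sSup (specNorm a lam '' Set.Icc L (2 * L))
            ≤ β⁻¹ * sSup (specNorm a lam '' Set.Icc 0 L)) := by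
  set E := Real.exp (2 * δ * L) with hEdef
  have hE : 1 < E := Real.one_lt_exp_iff.mpr (by positivity)
  set ε := (E - 1) * (1 - E⁻¹) with hεdef
  have hEinv : E⁻¹ < 1 := inv_lt_one_of_one_lt₀ hE
  have hEinvpos : 0 < E⁻¹ := inv_pos.mpr (by linarith)
  have hεpos : 0 < ε := mul_pos (by linarith) (by linarith)
  have hεE : ε * E = (E - 1) ^ 2 := by
    rw [hεdef]; field_simp
  set β := Real.sqrt (1 + ε / 4) with hβdef
  have hb2 : β ^ 2 = 1 + ε / 4 := Real.sq_sqrt (by linarith)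
  have hβ1 : 1 < β := by
    rw [hβdef]
    exact (Real.lt_sqrt (by norm_num)).mpr (by nlinarith)
  have hβpos : 0 < β := lt_trans one_pos hβ1
  have hβlt : β < Real.exp (δ * L) := by
    have hεlt : ε < E - 1 := by
      have : (E - 1) * (1 - E⁻¹) < (E - 1) * 1 := by
        apply mul_lt_mul_of_pos_left (by linarith : 1 - E⁻¹ < 1) (by linarith : (0:ℝ) < E - 1)
      simpa [hεdef] using this
    have h1 : 1 + ε / 4 < E := by linarith
    have h2 := Real.sqrt_lt_sqrt (by linarith : (0:ℝ) ≤ 1 + ε / 4) h1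
    have h3 : Real.sqrt E = Real.exp (δ * L) := by
      rw [hEdef, show 2 * δ * L = δ * L + δ * L by ring, Real.exp_add, ← sq,
        Real.sqrt_sq (Real.exp_nonneg _)]
    rw [← h3]; exact h2
  refine ⟨β, hβ1, hβlt, ?_⟩
  intro a lam hlam h0 h3sum
  by_contra hcon
  push_neg at hcon
  obtain ⟨hg, hd⟩ := hcon
  -- notation
  set x : ℕ → ℝ := fun k => Real.exp (-2 * lam k * L) with hxdef
  have hx : ∀ k, 0 < x k := fun k => Real.exp_pos _
  have he0 : ∀ k, Real.exp (-2 * lam k * 0) = 1 := fun k => by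
    rw [show -2 * lam k * 0 = 0 by ring, Real.exp_zero]
  have he2 : ∀ k, Real.exp (-2 * lam k * (2 * L)) = x k ^ 2 := fun k => by
    rw [show -2 * lam k * (2 * L) = -2 * lam k * L + -2 * lam k * L by ring,
      Real.exp_add, hxdef]; ring
  have he3 : ∀ k, Real.exp (-2 * lam k * (3 * L)) = x k ^ 3 := fun k => by
    rw [show -2 * lam k * (3 * L) = -2 * lam k * L + (-2 * lam k * L + -2 * lam k * L) by ring,
      Real.exp_add, Real.exp_add, hxdef]; ring
  -- summability in x-form
  have S0 : Summable fun k => a k ^ 2 * 1 := by simpa using h0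
  have S3 : Summable fun k => a k ^ 2 * x k ^ 3 := h3sum.congr fun k => by rw [he3 k]
  have S1 : Summable fun k => a k ^ 2 * x k := by
    refine Summable.of_nonneg_of_le (fun k => mul_nonneg (sq_nonneg _) (hx k).le)
      (fun k => ?_) (h0.add S3)
    have := aux_le1 (x k) (hx k).le
    nlinarith [sq_nonneg (a k)]
  have S2 : Summable fun k => a k ^ 2 * x k ^ 2 := by
    refine Summable.of_nonneg_of_le (fun k => mul_nonneg (sq_nonneg _) (by positivity))
      (fun k => ?_) (h0.add S3)
    have := aux_le2 (x k) (hx k).le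
    nlinarith [sq_nonneg (a k)]
  -- summability in exp-form
  have sum0 : Summable fun k => a k ^ 2 * Real.exp (-2 * lam k * 0) :=
    S0.congr fun k => by rw [he0 k]
  have sumL : Summable fun k => a k ^ 2 * Real.exp (-2 * lam k * L) := S1
  have sum2L : Summable fun k => a k ^ 2 * Real.exp (-2 * lam k * (2 * L)) :=
    S2.congr fun k => by rw [he2 k]
  -- the four tsums
  set T0 := ∑' k, a k ^ 2 * 1 with hT0def
  set T1 := ∑' k, a k ^ 2 * x k with hT1def
  set T2 := ∑' k, a k ^ 2 * x k ^ 2 with hT2def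
  set T3 := ∑' k, a k ^ 2 * x k ^ 3 with hT3def
  have hT0n : 0 ≤ T0 := tsum_nonneg fun k => by positivity
  have hT1n : 0 ≤ T1 := tsum_nonneg fun k => mul_nonneg (sq_nonneg _) (hx k).le
  have hT2n : 0 ≤ T2 := tsum_nonneg fun k => by positivity
  have hT3n : 0 ≤ T3 := tsum_nonneg fun k => by positivity
  -- specNorm values at grid points
  have hn0 : specNorm a lam 0 = Real.sqrt T0 := by
    unfold specNorm; rw [hT0def]; congr 1; exact tsum_congr fun k => by rw [he0 k]
  have hn1 : specNorm a lam L = Real.sqrt T1 := rfl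
  have hn2 : specNorm a lam (2 * L) = Real.sqrt T2 := by
    unfold specNorm; rw [hT2def]; congr 1; exact tsum_congr fun k => by rw [he2 k]
  have hn3 : specNorm a lam (3 * L) = Real.sqrt T3 := by
    unfold specNorm; rw [hT3def]; congr 1; exact tsum_congr fun k => by rw [he3 k]
  -- sSup facts
  have hub1 := specNorm_le_max a lam 0 L (by linarith) sum0 sumL
  have hub2 := specNorm_le_max a lam L (2 * L) (by linarith) sumL sum2L
  have hub3 := specNorm_le_max a lam (2 * L) (3 * L) (by linarith) sum2L h3sum
  have hbdd1 : BddAbove (specNorm a lam '' Set.Icc 0 L) := by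
    refine ⟨max (specNorm a lam 0) (specNorm a lam L), ?_⟩
    rintro y ⟨t, ht, rfl⟩; exact hub1 t ht
  have hbdd2 : BddAbove (specNorm a lam '' Set.Icc L (2 * L)) := by
    refine ⟨max (specNorm a lam L) (specNorm a lam (2 * L)), ?_⟩
    rintro y ⟨t, ht, rfl⟩; exact hub2 t ht
  have hbdd3 : BddAbove (specNorm a lam '' Set.Icc (2 * L) (3 * L)) := by
    refine ⟨max (specNorm a lam (2 * L)) (specNorm a lam (3 * L)), ?_⟩
    rintro y ⟨t, ht, rfl⟩; exact hub3 t ht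
  have hne2 : (specNorm a lam '' Set.Icc L (2 * L)).Nonempty :=
    ⟨specNorm a lam L, Set.mem_image_of_mem _ ⟨le_refl L, by linarith⟩⟩
  set S1' := sSup (specNorm a lam '' Set.Icc 0 L) with hS1'
  set S2' := sSup (specNorm a lam '' Set.Icc L (2 * L)) with hS2'
  set S3' := sSup (specNorm a lam '' Set.Icc (2 * L) (3 * L)) with hS3'
  have hS1ge : specNorm a lam 0 ≤ S1' :=
    le_csSup hbdd1 (Set.mem_image_of_mem _ ⟨le_refl 0, by linarith⟩)
  have hS3ge : specNorm a lam (3 * L) ≤ S3' :=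
    le_csSup hbdd3 (Set.mem_image_of_mem _ ⟨by linarith, le_refl (3 * L)⟩)
  have hS2le : S2' ≤ max (specNorm a lam L) (specNorm a lam (2 * L)) :=
    csSup_le hne2 (by rintro y ⟨t, ht, rfl⟩; exact hub2 t ht)
  -- positivity of S2'
  have hS1nonneg : 0 ≤ S1' := le_trans (by rw [hn0]; exact Real.sqrt_nonneg _) hS1ge
  have hS2pos : 0 < S2' :=
    lt_of_le_of_lt (by positivity : (0:ℝ) ≤ β⁻¹ * S1') hd
  -- M = max T1 T2 > 0 and max of sqrts
  set M := max T1 T2 with hMdef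
  have hMn : 0 ≤ M := le_trans hT1n (le_max_left _ _)
  have hmaxsqrt : max (specNorm a lam L) (specNorm a lam (2 * L)) = Real.sqrt M := by
    rw [hn1, hn2, hMdef]
    rcases le_total T1 T2 with h | h
    · rw [max_eq_right h, max_eq_right (Real.sqrt_le_sqrt h)]
    · rw [max_eq_left h, max_eq_left (Real.sqrt_le_sqrt h)]
  have hS2leM : S2' ≤ Real.sqrt M := by rw [← hmaxsqrt]; exact hS2le
  have hMpos : 0 < M := by
    by_contra hM
    push_neg at hM
    have hz : Real.sqrt M = 0 := Real.sqrt_eq_zero'.mpr hM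
    rw [hz] at hS2leM; linarith
  -- bounds T3 < β²M and T0 < β²M
  have hsqrtMpos : 0 < Real.sqrt M := Real.sqrt_pos.mpr hMpos
  have hT3lt : T3 < β ^ 2 * M := by
    have h1 : Real.sqrt T3 < β * Real.sqrt M := by
      calc Real.sqrt T3 = specNorm a lam (3 * L) := hn3.symm
        _ ≤ S3' := hS3ge
        _ < β * S2' := hg
        _ ≤ β * Real.sqrt M := mul_le_mul_of_nonneg_left hS2leM hβpos.le
    have h2 := pow_lt_pow_left₀ h1 (Real.sqrt_nonneg _) two_ne_zero
    rwa [Real.sq_sqrt hT3n, mul_pow, Real.sq_sqrt hMn] at h2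
  have hT0lt : T0 < β ^ 2 * M := by
    have hS1lt : S1' < β * S2' := by
      have := mul_lt_mul_of_pos_left hd hβpos
      rwa [← mul_assoc, mul_inv_cancel₀ hβpos.ne', one_mul] at this
    have h1 : Real.sqrt T0 < β * Real.sqrt M := by
      calc Real.sqrt T0 = specNorm a lam 0 := hn0.symm
        _ ≤ S1' := hS1ge
        _ < β * S2' := hS1lt
        _ ≤ β * Real.sqrt M := mul_le_mul_of_nonneg_left hS2leM hβpos.le
    have h2 := pow_lt_pow_left₀ h1 (Real.sqrt_nonneg _) two_ne_zero
    rwa [Real.sq_sqrt hT0n, mul_pow, Real.sq_sqrt hMn] at h2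
  -- Cauchy–Schwarz: T2² ≤ T1T3 and T1² ≤ T0T2
  have hcs1 : T2 ^ 2 ≤ T1 * T3 := by
    have h := tsum_cs (fun k => |a k| * Real.sqrt (x k))
      (fun k => |a k| * (Real.sqrt (x k) * x k))
      (fun k => mul_nonneg (abs_nonneg _) (Real.sqrt_nonneg _))
      (fun k => mul_nonneg (abs_nonneg _) (mul_nonneg (Real.sqrt_nonneg _) (hx k).le))
      (S1.congr fun k => by
        rw [mul_pow, sq_abs, Real.sq_sqrt (hx k).le])
      (S3.congr fun k => by
        rw [mul_pow, mul_pow, sq_abs, Real.sq_sqrt (hx k).le]; ring)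
    have e1 : (∑' k, |a k| * Real.sqrt (x k) * (|a k| * (Real.sqrt (x k) * x k))) = T2 := by
      rw [hT2def]
      exact tsum_congr fun k => by
        rw [show |a k| * Real.sqrt (x k) * (|a k| * (Real.sqrt (x k) * x k))
          = (|a k| ^ 2) * (Real.sqrt (x k) ^ 2 * x k) by ring, sq_abs,
          Real.sq_sqrt (hx k).le]; ring
    have e2 : (∑' k, (|a k| * Real.sqrt (x k)) ^ 2) = T1 := by
      rw [hT1def]
      exact tsum_congr fun k => by
        rw [mul_pow, sq_abs, Real.sq_sqrt (hx k).le]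
    have e3 : (∑' k, (|a k| * (Real.sqrt (x k) * x k)) ^ 2) = T3 := by
      rw [hT3def]
      exact tsum_congr fun k => by
        rw [mul_pow, mul_pow, sq_abs, Real.sq_sqrt (hx k).le]; ring
    rw [← e1, ← e2, ← e3]
    exact h
  have hcs0 : T1 ^ 2 ≤ T0 * T2 := by
    have h := tsum_cs (fun k => |a k|) (fun k => |a k| * x k)
      (fun k => abs_nonneg _)
      (fun k => mul_nonneg (abs_nonneg _) (hx k).le)
      (h0.congr fun k => by rw [sq_abs])
      (S2.congr fun k => by rw [mul_pow, sq_abs])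
    have e1 : (∑' k, |a k| * (|a k| * x k)) = T1 := by
      rw [hT1def]
      exact tsum_congr fun k => by
        rw [show |a k| * (|a k| * x k) = |a k| ^ 2 * x k by ring, sq_abs]
    have e2 : (∑' k, |a k| ^ 2) = T0 := by
      rw [hT0def]
      exact tsum_congr fun k => by rw [sq_abs, mul_one]
    have e3 : (∑' k, (|a k| * x k) ^ 2) = T2 := by
      rw [hT2def]
      exact tsum_congr fun k => by rw [mul_pow, sq_abs]
    rw [← e1, ← e2, ← e3]
    exact h
  -- the spectral gap inequality
  have hkey : (1 + ε) * (T1 + T2) ≤ T0 + T3 := by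
    have hterm : ∀ k, (1 + ε) * (a k ^ 2 * x k + a k ^ 2 * x k ^ 2)
        ≤ a k ^ 2 * 1 + a k ^ 2 * x k ^ 3 := by
      intro k
      have hcase : E ≤ x k ∨ x k * E ≤ 1 := by
        rcases le_abs.mp (hlam k) with h | h
        · right
          have h1 : x k * E = Real.exp (-2 * lam k * L + 2 * δ * L) := by
            rw [Real.exp_add]
          rw [h1]
          refine Real.exp_le_one_iff.mpr ?_
          have h2 : δ * L ≤ lam k * L := mul_le_mul_of_nonneg_right h hL.le
          linarith
        · left
          refine Real.exp_le_exp.mpr ?_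
          have h2 : δ * L ≤ -lam k * L := mul_le_mul_of_nonneg_right h hL.le
          linarith
      have hgap := aux_gap E ε (x k) hE (hx k) hεE hcase
      calc (1 + ε) * (a k ^ 2 * x k + a k ^ 2 * x k ^ 2)
          = a k ^ 2 * ((1 + ε) * (x k + x k ^ 2)) := by ring
        _ ≤ a k ^ 2 * (1 + x k ^ 3) := mul_le_mul_of_nonneg_left hgap (sq_nonneg _)
        _ = a k ^ 2 * 1 + a k ^ 2 * x k ^ 3 := by ring
    have h1 := Summable.tsum_le_tsum hterm ((S1.add S2).mul_left (1 + ε)) (S0.add S3)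
    rwa [tsum_mul_left, Summable.tsum_add S1 S2, Summable.tsum_add S0 S3] at h1
  -- final contradiction
  rw [hb2, hMdef] at hT3lt hT0lt
  rw [hMdef] at hMpos
  exact final_contra ε T0 T1 T2 T3 hεpos hT1n hT2n hMpos hT3lt hT0lt hcs1 hcs0 hkey
end
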